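/- Let 1 ≤ q < ∞ and let ψ : [0,∞) → [0,∞) be an increasing concave function with ψ(0) = 0. For every nonincreasing nonnegative measurable function x on (0,∞), one has (1 − M) · Σ_{k∈ℤ} x(2^k)^q ψ(2^k) ≤ ∫_0^∞ x(t)^q dψ(t) ≤ 2 · Σ_{k∈ℤ} x(2^k)^q ψ(2^k), where M = sup_{s>0} ψ(s/2)/ψ(s) < 1 is assumed. -/

import Mathlib

/-!
Split `(0, ∞)` into the dyadic intervals `(2^k, 2^(k+1)]`. On each of them `x^q` lies between
its values at the endpoints, while the `dψ`-mass `ψ(2^(k+1)) - ψ(2^k)` is at most `ψ(2^k)`, since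
concavity and `ψ 0 = 0` give `ψ(2s) ≤ 2ψ(s)`, and at least `(1 - M) ψ(2^(k+1))` by the choice
of `M`. Summing over `k` gives both bounds, the upper one even with constant `1`.
-/

open MeasureTheory Set

open scoped ENNReal

theorem ConcaveOn.map_mul_le_mul {f : ℝ → ℝ} (hf : ConcaveOn ℝ (Ici 0) f) (hf0 : 0 ≤ f 0)
    {c s : ℝ} (hc : 1 ≤ c) (hs : 0 ≤ s) : f (c * s) ≤ c * f s := by
  have hc0 : 0 < c := one_pos.trans_le hc
  have hmid := hf.2 (mem_Ici.2 le_rfl) (mem_Ici.2 (mul_nonneg hc0.le hs))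
    (sub_nonneg.2 (inv_le_one_of_one_le₀ hc)) (inv_nonneg.2 hc0.le) (sub_add_cancel 1 c⁻¹)
  have hs_eq : (1 - c⁻¹) • (0 : ℝ) + c⁻¹ • (c * s) = s := by
    simp [inv_mul_cancel_left₀ hc0.ne']
  rw [hs_eq, smul_eq_mul, smul_eq_mul] at hmid
  rw [← inv_mul_le_iff₀ hc0]
  linarith [mul_nonneg (sub_nonneg.2 (inv_le_one_of_one_le₀ hc)) hf0]

theorem iUnion_Ioc_zpow {α : Type*} [Field α] [LinearOrder α] [IsStrictOrderedRing α]
    [Archimedean α] {b : α} (hb : 1 < b) : ⋃ k : ℤ, Ioc (b ^ k) (b ^ (k + 1)) = Ioi 0 := by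
  ext t
  simp only [mem_iUnion, mem_Ioi]
  exact ⟨fun ⟨k, hk⟩ => (zpow_pos (one_pos.trans hb) k).trans hk.1,
    fun ht => exists_mem_Ioc_zpow ht hb⟩

theorem lintegral_Ioi_eq_tsum_Ioc_zpow (μ : Measure ℝ) (g : ℝ → ℝ≥0∞) {b : ℝ} (hb : 1 < b) :
    ∫⁻ t in Ioi 0, g t ∂μ = ∑' k : ℤ, ∫⁻ t in Ioc (b ^ k) (b ^ (k + 1)), g t ∂μ := by
  have hdisj : Pairwise (Function.onFun Disjoint fun k : ℤ => Ioc (b ^ k) (b ^ (k + 1))) := by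
    simpa using (zpow_right_mono₀ hb.le).pairwise_disjoint_on_Ioc_succ
  rw [← iUnion_Ioc_zpow hb, lintegral_iUnion (fun _ => measurableSet_Ioc) hdisj]

section AntitoneOn

variable {μ : Measure ℝ} {g : ℝ → ℝ≥0∞} {a b : ℝ}

theorem setLIntegral_Ioc_le_of_antitoneOn (hg : AntitoneOn g (Icc a b)) :
    ∫⁻ t in Ioc a b, g t ∂μ ≤ g a * μ (Ioc a b) := by
  rw [← setLIntegral_const]
  refine setLIntegral_mono' measurableSet_Ioc fun t ht => ?_
  exact hg (left_mem_Icc.2 (ht.1.le.trans ht.2)) (Ioc_subset_Icc_self ht) ht.1.le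

theorem mul_measure_Ioc_le_setLIntegral_of_antitoneOn (hg : AntitoneOn g (Icc a b)) :
    g b * μ (Ioc a b) ≤ ∫⁻ t in Ioc a b, g t ∂μ := by
  rw [← setLIntegral_const]
  refine setLIntegral_mono' measurableSet_Ioc fun t ht => ?_
  exact hg (Ioc_subset_Icc_self ht) (right_mem_Icc.2 (ht.1.le.trans ht.2)) ht.2

end AntitoneOn

theorem AntitoneOn.ofReal_rpow {x : ℝ → ℝ} {s : Set ℝ} {q : ℝ} (hx : AntitoneOn x s)
    (hx0 : ∀ t ∈ s, 0 ≤ x t) (hq : 0 ≤ q) : AntitoneOn (fun t => ENNReal.ofReal (x t ^ q)) s :=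
  fun _ hu _ hv huv => ENNReal.ofReal_le_ofReal (Real.rpow_le_rpow (hx0 _ hv) (hx hu hv huv) hq)

theorem StieltjesFunction.measure_Ioc_two_mul_le {ψ : StieltjesFunction ℝ}
    (hconc : ConcaveOn ℝ (Ici 0) ψ) (h0 : ψ 0 = 0) {s : ℝ} (hs : 0 ≤ s) :
    ψ.measure (Ioc s (2 * s)) ≤ ENNReal.ofReal (ψ s) := by
  rw [ψ.measure_Ioc]
  refine ENNReal.ofReal_le_ofReal ?_
  linarith [hconc.map_mul_le_mul h0.ge one_le_two hs]

theorem StieltjesFunction.ofReal_one_sub_mul_le_measure_Ioc {ψ : StieltjesFunction ℝ}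
    (h0 : ψ 0 = 0) {M s : ℝ} (hs : 0 ≤ s) (hM : ψ s ≤ M * ψ (2 * s)) :
    ENNReal.ofReal (1 - M) * ENNReal.ofReal (ψ (2 * s)) ≤ ψ.measure (Ioc s (2 * s)) := by
  have hψ2s : 0 ≤ ψ (2 * s) := h0 ▸ ψ.mono (by linarith)
  rw [← ENNReal.ofReal_mul' hψ2s, ψ.measure_Ioc]
  exact ENNReal.ofReal_le_ofReal (by linarith)

section Dyadic

variable {ψ : StieltjesFunction ℝ} {g : ℝ → ℝ≥0∞}

theorem two_zpow_add_one (k : ℤ) : (2 : ℝ) ^ (k + 1) = 2 * 2 ^ k := by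
  rw [zpow_add_one₀ two_ne_zero, mul_comm]

theorem lintegral_Ioi_le_tsum_dyadic (hconc : ConcaveOn ℝ (Ici 0) ψ) (h0 : ψ 0 = 0)
    (hg : AntitoneOn g (Ioi 0)) :
    ∫⁻ t in Ioi 0, g t ∂ψ.measure ≤ ∑' k : ℤ, g (2 ^ k) * ENNReal.ofReal (ψ (2 ^ k)) := by
  rw [lintegral_Ioi_eq_tsum_Ioc_zpow _ _ one_lt_two]
  refine ENNReal.tsum_le_tsum fun k => ?_
  have hpos : (0 : ℝ) < 2 ^ k := zpow_pos two_pos k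
  calc ∫⁻ t in Ioc (2 ^ k) (2 ^ (k + 1)), g t ∂ψ.measure
      ≤ g (2 ^ k) * ψ.measure (Ioc (2 ^ k) (2 ^ (k + 1))) :=
        setLIntegral_Ioc_le_of_antitoneOn (hg.mono fun t ht => hpos.trans_le ht.1)
    _ ≤ g (2 ^ k) * ENNReal.ofReal (ψ (2 ^ k)) := by
        rw [two_zpow_add_one]
        gcongr
        exact ψ.measure_Ioc_two_mul_le hconc h0 hpos.le

theorem ofReal_one_sub_mul_tsum_dyadic_le_lintegral (h0 : ψ 0 = 0) {M : ℝ}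
    (hM : ∀ s : ℝ, 0 < s → ψ (s / 2) ≤ M * ψ s) (hg : AntitoneOn g (Ioi 0)) :
    ENNReal.ofReal (1 - M) * ∑' k : ℤ, g (2 ^ k) * ENNReal.ofReal (ψ (2 ^ k))
      ≤ ∫⁻ t in Ioi 0, g t ∂ψ.measure := by
  rw [lintegral_Ioi_eq_tsum_Ioc_zpow _ _ one_lt_two, ← ENNReal.tsum_mul_left,
    ← (Equiv.addRight (1 : ℤ)).tsum_eq]
  refine ENNReal.tsum_le_tsum fun k => ?_
  have hpos : (0 : ℝ) < 2 ^ k := zpow_pos two_pos k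
  have hMk : ψ (2 ^ k) ≤ M * ψ (2 * 2 ^ k) := by
    simpa using hM (2 * 2 ^ k) (by positivity)
  calc ENNReal.ofReal (1 - M) * (g (2 ^ (k + 1)) * ENNReal.ofReal (ψ (2 ^ (k + 1))))
      = g (2 ^ (k + 1)) * (ENNReal.ofReal (1 - M) * ENNReal.ofReal (ψ (2 * 2 ^ k))) := by
        rw [two_zpow_add_one, mul_left_comm]
    _ ≤ g (2 ^ (k + 1)) * ψ.measure (Ioc (2 ^ k) (2 ^ (k + 1))) := by
        rw [two_zpow_add_one]
        gcongr
        exact ψ.ofReal_one_sub_mul_le_measure_Ioc h0 hpos.le hMk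
    _ ≤ ∫⁻ t in Ioc (2 ^ k) (2 ^ (k + 1)), g t ∂ψ.measure :=
        mul_measure_Ioc_le_setLIntegral_of_antitoneOn (hg.mono fun t ht => hpos.trans_le ht.1)

end Dyadic

theorem stmt6_general (q : ℝ) (hq : 1 ≤ q) (ψ : StieltjesFunction ℝ)
    (hψconc : ConcaveOn ℝ (Set.Ici 0) ψ)
    (hψ0 : ψ 0 = 0)
    (M : ℝ) (hM : ∀ s : ℝ, 0 < s → ψ (s / 2) ≤ M * ψ s)
    (x : ℝ → ℝ)
    (hxnonneg : ∀ t : ℝ, 0 < t → 0 ≤ x t)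
    (hxanti : AntitoneOn x (Set.Ioi 0)) :
    ENNReal.ofReal (1 - M) *
        ∑' k : ℤ, ENNReal.ofReal (x ((2 : ℝ) ^ k) ^ q * ψ ((2 : ℝ) ^ k))
      ≤ ∫⁻ t in Set.Ioi (0 : ℝ), ENNReal.ofReal (x t ^ q) ∂ψ.measure ∧
    ∫⁻ t in Set.Ioi (0 : ℝ), ENNReal.ofReal (x t ^ q) ∂ψ.measure
      ≤ 2 * ∑' k : ℤ, ENNReal.ofReal (x ((2 : ℝ) ^ k) ^ q * ψ ((2 : ℝ) ^ k)) := by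
  have hg := hxanti.ofReal_rpow hxnonneg (zero_le_one.trans hq)
  have hterm : ∀ k : ℤ, ENNReal.ofReal (x ((2 : ℝ) ^ k) ^ q * ψ ((2 : ℝ) ^ k))
      = ENNReal.ofReal (x (2 ^ k) ^ q) * ENNReal.ofReal (ψ (2 ^ k)) := fun k =>
    ENNReal.ofReal_mul (Real.rpow_nonneg (hxnonneg _ (zpow_pos two_pos k)) q)
  simp only [hterm]
  exact ⟨ofReal_one_sub_mul_tsum_dyadic_le_lintegral hψ0 hM hg,
    (lintegral_Ioi_le_tsum_dyadic hψconc hψ0 hg).trans (le_mul_of_one_le_left' one_le_two)⟩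

theorem stmt6 (q : ℝ) (hq : 1 ≤ q) (ψ : StieltjesFunction ℝ)
    (hψconc : ConcaveOn ℝ (Set.Ici 0) ψ)
    (hψmono : MonotoneOn ψ (Set.Ici 0)) (hψ0 : ψ 0 = 0)
    (M : ℝ) (hM : ∀ s : ℝ, 0 < s → ψ (s / 2) ≤ M * ψ s) (hM1 : M < 1)
    (x : ℝ → ℝ) (hxmeas : Measurable x)
    (hxnonneg : ∀ t : ℝ, 0 < t → 0 ≤ x t)
    (hxanti : AntitoneOn x (Set.Ioi 0)) :
    ENNReal.ofReal (1 - M) *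
        ∑' k : ℤ, ENNReal.ofReal (x ((2 : ℝ) ^ k) ^ q * ψ ((2 : ℝ) ^ k))
      ≤ ∫⁻ t in Set.Ioi (0 : ℝ), ENNReal.ofReal (x t ^ q) ∂ψ.measure ∧
    ∫⁻ t in Set.Ioi (0 : ℝ), ENNReal.ofReal (x t ^ q) ∂ψ.measure
      ≤ 2 * ∑' k : ℤ, ENNReal.ofReal (x ((2 : ℝ) ^ k) ^ q * ψ ((2 : ℝ) ^ k)) :=
  stmt6_general q hq ψ hψconc hψ0 M hM x hxnonneg hxanti
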